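/- Let c : ℝ → ℝ be continuously differentiable with c(x) > 0 for all x, and let u : ℝ × ℝ → ℝ be twice continuously differentiable and satisfy the transport equation ∂ₜu(t,x) + c(x)·∂ₓu(t,x) = 0 everywhere. Fix t ∈ ℝ, Δt > 0, let x(·) solve x'(s) = c(x(s)) with x(Δt) = x_k, and set y_k = x(0). Then u(t + Δt, x_k) = u(t, y_k) and ∂ₓu(t + Δt, x_k) = (c(y_k)/c(x_k))·∂ₓu(t, y_k). -/

import Mathlib

/-!
Along a characteristic `s ↦ (t + s, X s)` the chain rule and the equation make
`s ↦ u (t + s) (X s)` constant. Since `c` does not depend on time and mixed partials of a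
`C²` function commute, `∂ₜu` solves the same transport equation, so it is constant along the
characteristic as well; by the equation, `∂ₜu = -c ∂ₓu`, which gives the update of `∂ₓu`.
-/

open Function

section PartialDerivatives

variable {E : Type*} [NormedAddCommGroup E] [NormedSpace ℝ E]

lemma hasDerivAt_fst_slice {F : ℝ × ℝ → E} {a b : ℝ} (hF : DifferentiableAt ℝ F (a, b)) :
    HasDerivAt (fun s => F (s, b)) (fderiv ℝ F (a, b) (1, 0)) a :=
  hF.hasFDerivAt.comp_hasDerivAt a ((hasDerivAt_id a).prodMk (hasDerivAt_const a b))

lemma hasDerivAt_snd_slice {F : ℝ × ℝ → E} {a b : ℝ} (hF : DifferentiableAt ℝ F (a, b)) :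
    HasDerivAt (fun y => F (a, y)) (fderiv ℝ F (a, b) (0, 1)) b :=
  hF.hasFDerivAt.comp_hasDerivAt b ((hasDerivAt_const b a).prodMk (hasDerivAt_id b))

lemma hasDerivAt_uncurry_comp {u : ℝ → ℝ → E} {f g : ℝ → ℝ} {f' g' s : ℝ}
    (hu : DifferentiableAt ℝ (uncurry u) (f s, g s)) (hf : HasDerivAt f f' s)
    (hg : HasDerivAt g g' s) :
    HasDerivAt (fun s => u (f s) (g s))
      (f' • deriv (fun a => u a (g s)) (f s) + g' • deriv (fun b => u (f s) b) (g s)) s := by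
  have hchain := hu.hasFDerivAt.comp_hasDerivAt s (hf.prodMk hg)
  rwa [show (f', g') = f' • ((1 : ℝ), (0 : ℝ)) + g' • ((0 : ℝ), (1 : ℝ)) by simp, map_add,
    map_smul, map_smul, ← (hasDerivAt_fst_slice hu).deriv,
    ← (hasDerivAt_snd_slice hu).deriv] at hchain

lemma differentiable_fderiv_of_contDiff_two {V W : Type*} [NormedAddCommGroup V]
    [NormedSpace ℝ V] [NormedAddCommGroup W] [NormedSpace ℝ W] {f : V → W} (hf : ContDiff ℝ 2 f) :
    Differentiable ℝ (fderiv ℝ f) :=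
  (hf.fderiv_right (m := 1) le_rfl).differentiable one_ne_zero

end PartialDerivatives

section Transport

def SolvesTransport (c : ℝ → ℝ) (u : ℝ → ℝ → ℝ) : Prop :=
  ∀ t x, deriv (fun s => u s x) t + c x * deriv (fun y => u t y) x = 0

variable {c : ℝ → ℝ} {u : ℝ → ℝ → ℝ}

theorem SolvesTransport.apply_characteristic (hpde : SolvesTransport c u)
    (hu : Differentiable ℝ (uncurry u)) {X : ℝ → ℝ} (hX : ∀ s, HasDerivAt X (c (X s)) s)
    (t s : ℝ) : u (t + s) (X s) = u t (X 0) := by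
  have hderiv : ∀ s, HasDerivAt (fun s => u (t + s) (X s)) 0 s := by
    intro s
    have hchain := hasDerivAt_uncurry_comp (hu _) ((hasDerivAt_id s).const_add t) (hX s)
    rwa [smul_eq_mul, smul_eq_mul, one_mul, hpde] at hchain
  simpa using is_const_of_deriv_eq_zero (fun s => (hderiv s).differentiableAt)
    (fun s => (hderiv s).deriv) s 0

lemma differentiable_uncurry_deriv_fst (hu : ContDiff ℝ 2 (uncurry u)) :
    Differentiable ℝ (uncurry fun t x => deriv (fun s => u s x) t) := by
  have hslice : (uncurry fun t x => deriv (fun s => u s x) t) =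
      fun p => fderiv ℝ (uncurry u) p (1, 0) := by
    ext ⟨t, x⟩
    exact (hasDerivAt_fst_slice ((hu.differentiable (by norm_num)) (t, x))).deriv
  rw [hslice]
  have := differentiable_fderiv_of_contDiff_two hu
  fun_prop

theorem SolvesTransport.deriv_fst (hpde : SolvesTransport c u)
    (hu : ContDiff ℝ 2 (uncurry u)) :
    SolvesTransport c fun t x => deriv (fun s => u s x) t := by
  intro t x
  set G := fderiv ℝ (uncurry u)
  have hu1 : Differentiable ℝ (uncurry u) := hu.differentiable (by norm_num)
  have hG : Differentiable ℝ G := differentiable_fderiv_of_contDiff_two hu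
  have hu_t : ∀ s y, deriv (fun s => u s y) s = G (s, y) (1, 0) :=
    fun s y => (hasDerivAt_fst_slice (hu1 (s, y))).deriv
  have hu_x : ∀ s y, deriv (fun y => u s y) y = G (s, y) (0, 1) :=
    fun s y => (hasDerivAt_snd_slice (hu1 (s, y))).deriv
  have hG_t : ∀ v, HasDerivAt (fun s => G (s, x) v) (fderiv ℝ G (t, x) (1, 0) v) t := fun v => by
    simpa using (hasDerivAt_fst_slice (hG (t, x))).clm_apply (hasDerivAt_const t v)
  have hG_x : HasDerivAt (fun y => G (t, y) (1, 0)) (fderiv ℝ G (t, x) (0, 1) (1, 0)) x := by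
    simpa using (hasDerivAt_snd_slice (hG (t, x))).clm_apply (hasDerivAt_const x ((1 : ℝ), (0 : ℝ)))
  have hpde_t : HasDerivAt (fun s => G (s, x) (1, 0) + c x * G (s, x) (0, 1))
      (fderiv ℝ G (t, x) (1, 0) (1, 0) + c x * fderiv ℝ G (t, x) (1, 0) (0, 1)) t :=
    (hG_t _).add ((hG_t _).const_mul (c x))
  have hpde_t_zero : (fun s => G (s, x) (1, 0) + c x * G (s, x) (0, 1)) = fun _ => 0 := by
    ext s
    rw [← hu_t, ← hu_x, hpde]
  rw [hpde_t_zero] at hpde_t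
  have hsymm : fderiv ℝ G (t, x) (0, 1) (1, 0) = fderiv ℝ G (t, x) (1, 0) (0, 1) :=
    hu.contDiffAt.isSymmSndFDerivAt (by simp) _ _
  simp only [hu_t, (hG_t _).deriv, hG_x.deriv, hsymm]
  exact ((hasDerivAt_const t (0 : ℝ)).unique hpde_t).symm

end Transport

theorem stmt_2_general (c : ℝ → ℝ) (hcpos : ∀ x, 0 < c x)
    (u : ℝ → ℝ → ℝ) (hu : ContDiff ℝ 2 (Function.uncurry u))
    (hpde : ∀ t x, deriv (fun s => u s x) t + c x * deriv (fun y => u t y) x = 0)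
    (t Δt : ℝ)
    (X : ℝ → ℝ) (hX : ∀ s, HasDerivAt X (c (X s)) s)
    (xk yk : ℝ) (hxk : X Δt = xk) (hyk : yk = X 0) :
    u (t + Δt) xk = u t yk ∧
    deriv (fun x => u (t + Δt) x) xk = (c yk / c xk) * deriv (fun x => u t x) yk := by
  subst hxk hyk
  have hpde : SolvesTransport c u := hpde
  refine ⟨hpde.apply_characteristic (hu.differentiable (by norm_num)) hX t Δt, ?_⟩
  have hu_t_conserved := (hpde.deriv_fst hu).apply_characteristic (differentiable_uncurry_deriv_fst hu) hX
    t Δt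
  have hpde_head := hpde (t + Δt) (X Δt)
  have hpde_foot := hpde t (X 0)
  rw [div_mul_eq_mul_div, eq_div_iff (hcpos _).ne']
  linarith

/-- Exact update formula for the transport equation `u_t + c(x)u_x = 0`:
along the backward characteristic with foot `y_k = x(0)` and head `x_k = x(Δt)`,
`u(t+Δt, x_k) = u(t, y_k)` and `u_x(t+Δt, x_k) = (c(y_k)/c(x_k)) u_x(t, y_k)`. -/
theorem stmt_2 (c : ℝ → ℝ) (hc : ContDiff ℝ 1 c) (hcpos : ∀ x, 0 < c x)
    (u : ℝ → ℝ → ℝ) (hu : ContDiff ℝ 2 (Function.uncurry u))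
    (hpde : ∀ t x, deriv (fun s => u s x) t + c x * deriv (fun y => u t y) x = 0)
    (t Δt : ℝ) (hΔt : 0 < Δt)
    (X : ℝ → ℝ) (hX : ∀ s, HasDerivAt X (c (X s)) s)
    (xk yk : ℝ) (hxk : X Δt = xk) (hyk : yk = X 0) :
    u (t + Δt) xk = u t yk ∧
    deriv (fun x => u (t + Δt) x) xk = (c yk / c xk) * deriv (fun x => u t x) yk :=
  stmt_2_general c hcpos u hu hpde t Δt X hX xk yk hxk hyk
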